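/- Let I be a finite nonempty index set of cardinality c, let a_i > 0 for i ∈ I, and let m be a positive integer. For each α ∈ (0,1), let (X_{α,i,j})_{i ∈ I, 1 ≤ j ≤ m} be i.i.d. positive strictly α-stable random variables; define V_j = ∑_{i ∈ I} a_i·X_{α,i,j} and M_j = max_{i ∈ I} X_{α,i,j}^α for j = 1, ..., m, and let F_α(y) = P(X_α^α ≤ y) be the cumulative distribution function of X_α^α. Then c·∑_{j=1}^m V_j^{-α} + c·∑_{j=1}^m log F_α(M_j) converges to 0 in probability as α → 0⁺, and in particular V_j^{-α} + log F_α(M_j) converges to 0 in probability as α → 0⁺ for each j = 1, ..., m. That is, the pivotal quantities of the random projection sketch and of the maximal-term sketch are asymptotically equivalent for small α. -/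

import Mathlib

/-!
As `α → 0⁺`, `X_α ^ α` converges in law to `1 / E` with `E` standard exponential. Quantitatively,
Chernoff bounds drawn from the Laplace transform give `P(X_α ^ α ≤ y) ≤ exp (1 - 1 / y)` uniformly
in `α`, and `log F_α(y) = -1 / y + o(1)` uniformly on `y ≥ y₀`. Deterministically, `V_j ^ α` lies
between `(min a) ^ α * M_j` and `(c * max a) ^ α * M_j`, and both factors tend to `1`, so
`V_j ^ (-α) = 1 / M_j + o(1)` whenever `M_j ≥ y₀`. Hence `V_j ^ (-α)` and `-log F_α(M_j)` both equal
`1 / M_j + o(1)` outside an event of probability at most `exp (1 - 1 / y₀)`. Convergence in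
probability is preserved by finite sums and scalar multiples, which gives the statement on the sum.
-/
open MeasureTheory ProbabilityTheory Filter

/-- `X` is a positive strictly `α`-stable random variable (under `P`): it is a.s. positive
and its Laplace transform is `E[exp (-λ X)] = exp (-λ^α)` for all `λ ≥ 0`. -/
def IsPositiveStable {Ω : Type*} [MeasurableSpace Ω] (P : Measure Ω)
    (α : ℝ) (X : Ω → ℝ) : Prop :=
  (∀ᵐ ω ∂P, 0 < X ω) ∧
    ∀ l : ℝ, 0 ≤ l → ∫ ω, Real.exp (-(l * X ω)) ∂P = Real.exp (-(l ^ α))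

open Real Set Topology
open scoped ENNReal

namespace IsPositiveStable

variable {Ω : Type*} [MeasurableSpace Ω] {P : Measure Ω} {α : ℝ} {X : Ω → ℝ}

lemma integrable_exp_neg_mul [IsFiniteMeasure P] (hX : Measurable X)
    (hs : IsPositiveStable P α X) {l : ℝ} (hl : 0 ≤ l) :
    Integrable (fun ω => exp (-(l * X ω))) P := by
  refine (integrable_const (1 : ℝ)).mono' (hX.const_mul l).neg.exp.aestronglyMeasurable ?_
  filter_upwards [hs.1] with ω hω
  rw [norm_eq_abs, abs_exp, exp_le_one_iff, neg_nonpos]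
  positivity

lemma measureReal_le_le_exp [IsFiniteMeasure P] (hX : Measurable X)
    (hs : IsPositiveStable P α X) {l : ℝ} (hl : 0 ≤ l) (s : ℝ) :
    P.real {ω | X ω ≤ s} ≤ exp (l * s - l ^ α) := by
  have hint : Integrable (fun ω => exp (-l * X ω)) P := by
    simpa only [neg_mul] using hs.integrable_exp_neg_mul hX hl
  have hmgf : mgf X P (-l) = exp (-(l ^ α)) := by
    simpa only [mgf, neg_mul] using hs.2 l hl
  calc P.real {ω | X ω ≤ s} ≤ exp (-(-l) * s) * mgf X P (-l) :=
        measure_le_le_exp_mul_mgf s (neg_nonpos.2 hl) hint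
    _ = exp (l * s - l ^ α) := by rw [hmgf, ← exp_add, neg_neg, sub_eq_add_neg]

lemma exp_neg_sub_exp_neg_le_measureReal_le [IsProbabilityMeasure P] (hX : Measurable X)
    (hs : IsPositiveStable P α X) {l : ℝ} (hl : 0 ≤ l) (s : ℝ) :
    exp (-(l ^ α)) - exp (-(l * s)) ≤ P.real {ω | X ω ≤ s} := by
  have hA : MeasurableSet {ω | X ω ≤ s} := measurableSet_le hX measurable_const
  have hpt : ∀ᵐ ω ∂P, exp (-(l * X ω)) ≤ {ω | X ω ≤ s}.indicator 1 ω + exp (-(l * s)) := by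
    filter_upwards [hs.1] with ω hω
    by_cases hωs : ω ∈ {ω | X ω ≤ s}
    · rw [Set.indicator_of_mem hωs, Pi.one_apply]
      have : exp (-(l * X ω)) ≤ 1 := exp_le_one_iff.2 (by simp only [neg_nonpos]; positivity)
      linarith [exp_pos (-(l * s))]
    · rw [Set.indicator_of_notMem hωs, zero_add, exp_le_exp, neg_le_neg_iff]
      exact mul_le_mul_of_nonneg_left (not_le.1 hωs).le hl
  have hint : Integrable (fun ω => {ω | X ω ≤ s}.indicator 1 ω + exp (-(l * s))) P :=
    ((integrable_const 1).indicator hA).add (integrable_const _)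
  have hmono := integral_mono_ae (hs.integrable_exp_neg_mul hX hl) hint hpt
  rw [hs.2 l hl, integral_add ((integrable_const 1).indicator hA) (integrable_const _),
    integral_indicator_one hA, integral_const, probReal_univ, one_smul] at hmono
  linarith

lemma measureReal_rpow_le_eq (hα : 0 < α) (hs : IsPositiveStable P α X) {y : ℝ} (hy : 0 ≤ y) :
    P.real {ω | X ω ^ α ≤ y} = P.real {ω | X ω ≤ y ^ α⁻¹} := by
  refine measureReal_congr (eventuallyEq_set.2 ?_)
  filter_upwards [hs.1] with ω hω
  exact (le_rpow_inv_iff_of_pos hω.le hy hα).symm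

lemma measureReal_rpow_le_le_exp [IsFiniteMeasure P] (hα : 0 < α) (hX : Measurable X)
    (hs : IsPositiveStable P α X) {v y : ℝ} (hv : 0 ≤ v) (hy : 0 ≤ y) :
    P.real {ω | X ω ^ α ≤ y} ≤ exp ((v * y) ^ α⁻¹ - v) := by
  have h := hs.measureReal_le_le_exp hX (rpow_nonneg hv α⁻¹) (y ^ α⁻¹)
  rwa [← mul_rpow hv hy, rpow_inv_rpow hv hα.ne', ← hs.measureReal_rpow_le_eq hα hy] at h

lemma exp_neg_sub_exp_neg_le_measureReal_rpow_le [IsProbabilityMeasure P] (hα : 0 < α)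
    (hX : Measurable X) (hs : IsPositiveStable P α X) {v y : ℝ} (hv : 0 ≤ v) (hy : 0 ≤ y) :
    exp (-v) - exp (-(v * y) ^ α⁻¹) ≤ P.real {ω | X ω ^ α ≤ y} := by
  have h := hs.exp_neg_sub_exp_neg_le_measureReal_le hX (rpow_nonneg hv α⁻¹) (y ^ α⁻¹)
  rwa [← mul_rpow hv hy, rpow_inv_rpow hv hα.ne', ← hs.measureReal_rpow_le_eq hα hy] at h

end IsPositiveStable

section StableCDF

variable {Ω : Type*} [MeasurableSpace Ω] {P : Measure Ω}

lemma exists_pos_forall_measure_rpow_le_le [IsFiniteMeasure P] {η : ℝ≥0∞} (hη : 0 < η) :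
    ∃ y₀ > 0, ∀ α > 0, ∀ X : Ω → ℝ, Measurable X → IsPositiveStable P α X →
      P {ω | X ω ^ α ≤ y₀} ≤ η := by
  have hbound : Tendsto (fun y : ℝ => ENNReal.ofReal (exp (1 - y⁻¹))) (𝓝[>] 0) (𝓝 0) := by
    have h : Tendsto (fun y : ℝ => 1 - y⁻¹) (𝓝[>] 0) atBot := by
      simpa only [sub_eq_add_neg, Function.comp_def] using
        tendsto_atBot_add_const_left _ 1 (tendsto_neg_atTop_atBot.comp tendsto_inv_nhdsGT_zero)
    simpa using ENNReal.tendsto_ofReal (tendsto_exp_atBot.comp h)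
  obtain ⟨y₀, hy₀η, hy₀⟩ :=
    ((ENNReal.tendsto_nhds_zero.1 hbound η hη).and self_mem_nhdsWithin).exists
  refine ⟨y₀, hy₀, fun α hα X hX hs => ?_⟩
  have h := hs.measureReal_rpow_le_le_exp hα hX (inv_nonneg.2 hy₀.le) hy₀.le
  rw [inv_mul_cancel₀ hy₀.ne', one_rpow] at h
  calc P {ω | X ω ^ α ≤ y₀} = ENNReal.ofReal (P.real {ω | X ω ^ α ≤ y₀}) :=
        (ofReal_measureReal).symm
    _ ≤ η := (ENNReal.ofReal_le_ofReal h).trans hy₀η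

lemma eventually_forall_abs_log_measureReal_rpow_le_add_inv_lt [IsProbabilityMeasure P]
    (X : ℝ → Ω → ℝ) (hX : ∀ α ∈ Ioo (0 : ℝ) 1, Measurable (X α))
    (hs : ∀ α ∈ Ioo (0 : ℝ) 1, IsPositiveStable P α (X α)) {y₀ δ : ℝ} (hy₀ : 0 < y₀)
    (hδ : 0 < δ) :
    ∀ᶠ α in 𝓝[>] 0, ∀ y, y₀ ≤ y → |log (P.real {ω | X α ω ^ α ≤ y}) + y⁻¹| < δ := by
  set ε := min (1 / 2) (δ * y₀ / 4)
  have hε : 0 < ε := lt_min one_half_pos (by positivity)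
  have hε_lt_one : ε < 1 := (min_le_left _ _).trans_lt one_half_lt_one
  have hεδ : ε ≤ δ * y₀ / 4 := min_le_right _ _
  have hsmall : ∀ᶠ α : ℝ in 𝓝[>] 0, (1 - ε) ^ α⁻¹ < δ / 2 :=
    ((tendsto_rpow_atTop_of_base_lt_one _ (by linarith) (by linarith)).comp
      tendsto_inv_nhdsGT_zero).eventually_lt_const (by positivity)
  have hlarge : ∀ᶠ α : ℝ in 𝓝[>] 0,
      exp (-(1 + ε) ^ α⁻¹) < exp (-((1 + ε) / y₀)) * (1 - exp (-(δ / 2))) :=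
    (tendsto_exp_neg_atTop_nhds_zero.comp ((tendsto_rpow_atTop_of_base_gt_one _
      (by linarith)).comp tendsto_inv_nhdsGT_zero)).eventually_lt_const
      (mul_pos (exp_pos _) (sub_pos.2 (exp_lt_one_iff.2 (by linarith))))
  filter_upwards [Ioo_mem_nhdsGT one_pos, hsmall, hlarge] with α hα hsmall hlarge y hy
  have hy_pos : 0 < y := hy₀.trans_le hy
  set F := P.real {ω | X α ω ^ α ≤ y}
  have hupper : F ≤ exp ((1 - ε) ^ α⁻¹ - (1 - ε) / y) := by
    have h := (hs α hα).measureReal_rpow_le_le_exp hα.1 (hX α hα)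
      (v := (1 - ε) / y) (div_nonneg (by linarith) hy_pos.le) hy_pos.le
    rwa [div_mul_cancel₀ _ hy_pos.ne'] at h
  have hlower : exp (-((1 + ε) / y) - δ / 2) ≤ F := by
    have h := (hs α hα).exp_neg_sub_exp_neg_le_measureReal_rpow_le hα.1 (hX α hα)
      (v := (1 + ε) / y) (by positivity) hy_pos.le
    rw [div_mul_cancel₀ _ hy_pos.ne'] at h
    have hmono : exp (-((1 + ε) / y₀)) ≤ exp (-((1 + ε) / y)) :=
      exp_le_exp.2 (neg_le_neg (div_le_div_of_nonneg_left (by positivity) hy₀ hy))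
    have hδ_exp : exp (-(δ / 2)) < 1 := exp_lt_one_iff.2 (by linarith)
    rw [sub_eq_add_neg, exp_add]
    nlinarith
  have hF_pos : 0 < F := (exp_pos _).trans_le hlower
  have hlog_upper := (log_le_iff_le_exp hF_pos).2 hupper
  have hlog_lower := (le_log_iff_exp_le hF_pos).2 hlower
  have hεy : ε / y ≤ δ / 4 := by
    rw [div_le_iff₀ hy_pos]; nlinarith
  have h1 : (1 - ε) / y = y⁻¹ - ε / y := by ring
  have h2 : (1 + ε) / y = y⁻¹ + ε / y := by ring
  rw [abs_lt]
  constructor <;> linarith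

end StableCDF

section Projection

open Finset

variable {I : Type*} [Fintype I] [Nonempty I] {a : I → ℝ}

lemma rpow_neg_sum_mul_mem_Icc (ha : ∀ i, 0 < a i) {x : I → ℝ} (hx : ∀ i, 0 < x i) {α : ℝ}
    (hα : 0 < α) :
    (∑ i, a i * x i) ^ (-α) ∈
      Icc ((Fintype.card I * univ.sup' univ_nonempty a) ^ (-α) *
          (univ.sup' univ_nonempty fun i => x i ^ α)⁻¹)
        ((univ.inf' univ_nonempty a) ^ (-α) * (univ.sup' univ_nonempty fun i => x i ^ α)⁻¹) := by
  obtain ⟨k, -, hk⟩ := exists_mem_eq_sup' univ_nonempty fun i => x i ^ α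
  have hxk : ∀ i, x i ≤ x k := fun i =>
    (rpow_le_rpow_iff (hx i).le (hx k).le hα).1 (hk ▸ le_sup' (fun i => x i ^ α) (mem_univ i))
  have hinf_pos : 0 < univ.inf' univ_nonempty a := (lt_inf'_iff _).2 fun i _ => ha i
  have hsup_pos : 0 < univ.sup' univ_nonempty a :=
    (ha (Classical.arbitrary I)).trans_le (le_sup' a (mem_univ _))
  have hV_lower : univ.inf' univ_nonempty a * x k ≤ ∑ i, a i * x i :=
    (mul_le_mul_of_nonneg_right (inf'_le a (mem_univ k)) (hx k).le).trans
      (single_le_sum (fun i _ => (mul_pos (ha i) (hx i)).le) (mem_univ k))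
  have hV_upper : ∑ i, a i * x i ≤ Fintype.card I * univ.sup' univ_nonempty a * x k :=
    calc ∑ i, a i * x i ≤ ∑ _i : I, univ.sup' univ_nonempty a * x k :=
          sum_le_sum fun i _ => mul_le_mul (le_sup' a (mem_univ i)) (hxk i) (hx i).le hsup_pos.le
      _ = Fintype.card I * univ.sup' univ_nonempty a * x k := by
          rw [sum_const, card_univ, nsmul_eq_mul, mul_assoc]
  rw [hk, ← rpow_neg (hx k).le, ← mul_rpow (by positivity) (hx k).le,
    ← mul_rpow hinf_pos.le (hx k).le]
  exact ⟨rpow_le_rpow_of_nonpos ((mul_pos hinf_pos (hx k)).trans_le hV_lower) hV_upper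
      (by linarith),
    rpow_le_rpow_of_nonpos (mul_pos hinf_pos (hx k)) hV_lower (by linarith)⟩

lemma abs_sub_le_of_mem_Icc_mul {v w lo hi r : ℝ} (hw : 0 ≤ w) (hv : v ∈ Icc (lo * w) (hi * w))
    (hlo : |lo - 1| ≤ r) (hhi : |hi - 1| ≤ r) : |v - w| ≤ r * w := by
  rw [abs_le] at hlo hhi ⊢
  constructor <;> nlinarith [hv.1, hv.2]

lemma eventually_forall_abs_rpow_neg_sum_mul_sub_inv_lt (ha : ∀ i, 0 < a i) {y₀ δ : ℝ}
    (hy₀ : 0 < y₀) (hδ : 0 < δ) :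
    ∀ᶠ α in 𝓝[>] (0 : ℝ), ∀ x : I → ℝ, (∀ i, 0 < x i) →
      y₀ ≤ univ.sup' univ_nonempty (fun i => x i ^ α) →
      |(∑ i, a i * x i) ^ (-α) - (univ.sup' univ_nonempty fun i => x i ^ α)⁻¹| < δ := by
  have hnear : ∀ b : ℝ, 0 < b → ∀ᶠ α : ℝ in 𝓝[>] 0, |b ^ (-α) - 1| ≤ δ * y₀ / 2 := by
    intro b hb
    have h : Tendsto (fun α : ℝ => b ^ (-α)) (𝓝 0) (𝓝 1) := by
      simpa [Function.comp_def] using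
        (continuousAt_const_rpow hb.ne').tendsto.comp (tendsto_neg (0 : ℝ))
    filter_upwards [(h.mono_left nhdsWithin_le_nhds).eventually
      (Metric.closedBall_mem_nhds (1 : ℝ) (show 0 < δ * y₀ / 2 by positivity))] with α hα
    rwa [dist_eq] at hα
  have hinf_pos : 0 < univ.inf' univ_nonempty a := (lt_inf'_iff _).2 fun i _ => ha i
  have hsup_pos : 0 < univ.sup' univ_nonempty a :=
    (ha (Classical.arbitrary I)).trans_le (le_sup' a (mem_univ _))
  filter_upwards [self_mem_nhdsWithin, hnear _ hinf_pos,
    hnear (Fintype.card I * univ.sup' univ_nonempty a) (by positivity)] with α hα hlo hhi x hx hM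
  calc _ ≤ δ * y₀ / 2 * (univ.sup' univ_nonempty fun i => x i ^ α)⁻¹ :=
        abs_sub_le_of_mem_Icc_mul (inv_nonneg.2 (hy₀.le.trans hM))
          (rpow_neg_sum_mul_mem_Icc ha hx hα) hhi hlo
    _ ≤ δ * y₀ / 2 * y₀⁻¹ := by gcongr
    _ < δ := by field_simp; linarith

end Projection

section ConvergenceInMeasure

variable {Ω ι κ E : Type*} [MeasurableSpace Ω] {μ : Measure Ω} {l : Filter ι}

lemma tendstoInMeasure_zero_iff_abs {f : ι → Ω → ℝ} :
    TendstoInMeasure μ f l 0 ↔ ∀ δ, 0 < δ → Tendsto (fun i => μ {x | δ ≤ |f i x|}) l (𝓝 0) := by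
  simp only [tendstoInMeasure_iff_norm, Pi.zero_apply, sub_zero, norm_eq_abs]

lemma TendstoInMeasure.finset_sum [SeminormedAddCommGroup E] {s : Finset κ}
    {f : κ → ι → Ω → E} {g : κ → Ω → E} (hf : ∀ j ∈ s, TendstoInMeasure μ (f j) l (g j)) :
    TendstoInMeasure μ (fun i x => ∑ j ∈ s, f j i x) l (fun x => ∑ j ∈ s, g j x) := by
  simp only [tendstoInMeasure_iff_norm] at hf ⊢
  intro ε hε
  rcases s.eq_empty_or_nonempty with rfl | hs
  · simpa [not_le.2 hε] using tendsto_const_nhds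
  set ε' := ε / s.card
  have hε' : 0 < ε' := div_pos hε (Nat.cast_pos.2 hs.card_pos)
  have hsub : ∀ i, {x | ε ≤ ‖∑ j ∈ s, f j i x - ∑ j ∈ s, g j x‖} ⊆
      ⋃ j ∈ s, {x | ε' ≤ ‖f j i x - g j x‖} := by
    intro i x hx
    simp only [Set.mem_iUnion, Set.mem_ofPred_eq, exists_prop] at hx ⊢
    by_contra! hsmall
    refine not_lt.2 hx ?_
    calc ‖∑ j ∈ s, f j i x - ∑ j ∈ s, g j x‖ ≤ ∑ j ∈ s, ‖f j i x - g j x‖ := by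
          rw [← Finset.sum_sub_distrib]; exact norm_sum_le _ _
      _ < ∑ _j ∈ s, ε' := Finset.sum_lt_sum_of_nonempty hs hsmall
      _ = ε := by
          rw [Finset.sum_const, nsmul_eq_mul]
          exact mul_div_cancel₀ ε (Nat.cast_ne_zero.2 hs.card_pos.ne')
  refine tendsto_of_tendsto_of_tendsto_of_le_of_le tendsto_const_nhds
    (by simpa using tendsto_finsetSum s fun j hj => hf j hj ε' hε') (fun _ => zero_le)
    fun i => (measure_mono (hsub i)).trans (measure_biUnion_finset_le s _)

lemma TendstoInMeasure.const_smul {𝕜 : Type*} [NormedField 𝕜] [SeminormedAddCommGroup E]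
    [NormedSpace 𝕜 E] {f : ι → Ω → E} {g : Ω → E} (hf : TendstoInMeasure μ f l g) (c : 𝕜) :
    TendstoInMeasure μ (fun i x => c • f i x) l (fun x => c • g x) := by
  simp only [tendstoInMeasure_iff_norm] at hf ⊢
  intro ε hε
  rcases eq_or_ne c 0 with rfl | hc
  · simpa [not_le.2 hε] using tendsto_const_nhds
  have hc' : 0 < ‖c‖ := norm_pos_iff.2 hc
  simpa only [← smul_sub, norm_smul, div_le_iff₀' hc'] using hf (ε / ‖c‖) (div_pos hε hc')

end ConvergenceInMeasure

lemma tendstoInMeasure_rpow_neg_sum_mul_add_log_measureReal {Ω : Type*} [MeasurableSpace Ω]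
    {P : Measure Ω} [IsProbabilityMeasure P] {I : Type*} [Fintype I] [Nonempty I]
    {a : I → ℝ} (ha : ∀ i, 0 < a i) (Y : ℝ → I → Ω → ℝ) (X₀ : ℝ → Ω → ℝ)
    (hYmeas : ∀ α ∈ Ioo (0 : ℝ) 1, ∀ i, Measurable (Y α i))
    (hX₀meas : ∀ α ∈ Ioo (0 : ℝ) 1, Measurable (X₀ α))
    (hYstab : ∀ α ∈ Ioo (0 : ℝ) 1, ∀ i, IsPositiveStable P α (Y α i))
    (hX₀stab : ∀ α ∈ Ioo (0 : ℝ) 1, IsPositiveStable P α (X₀ α)) :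
    TendstoInMeasure P (fun α ω => (∑ i, a i * Y α i ω) ^ (-α) +
      log (P.real {ω' | X₀ α ω' ^ α ≤
        Finset.univ.sup' Finset.univ_nonempty fun i => Y α i ω ^ α})) (𝓝[>] 0) 0 := by
  rw [tendstoInMeasure_zero_iff_abs]
  intro δ hδ
  rw [ENNReal.tendsto_nhds_zero]
  intro η hη
  obtain ⟨y₀, hy₀, hsmall⟩ := exists_pos_forall_measure_rpow_le_le (P := P) hη
  let i₀ := Classical.arbitrary I
  filter_upwards [Ioo_mem_nhdsGT one_pos,
    eventually_forall_abs_rpow_neg_sum_mul_sub_inv_lt ha hy₀ (half_pos hδ),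
    eventually_forall_abs_log_measureReal_rpow_le_add_inv_lt X₀ hX₀meas hX₀stab hy₀
      (half_pos hδ)] with α hα hproj hcdf
  refine (measure_mono_ae ?_).trans (hsmall α hα.1 _ (hYmeas α hα i₀) (hYstab α hα i₀))
  filter_upwards [ae_all_iff.2 fun i => (hYstab α hα i).1] with ω hpos hω
  by_contra hlarge
  have hM : y₀ ≤ Finset.univ.sup' Finset.univ_nonempty fun i => Y α i ω ^ α :=
    (not_le.1 hlarge).le.trans (Finset.le_sup' (fun i => Y α i ω ^ α) (Finset.mem_univ i₀))
  have hproj_ω := abs_lt.1 (hproj (fun i => Y α i ω) hpos hM)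
  have hcdf_ω := abs_lt.1 (hcdf _ hM)
  exact not_le.2 (abs_lt.2 ⟨by linarith, by linarith⟩) hω

theorem projection_maxterm_pivots_equivalent_general {Ω : Type*} [MeasurableSpace Ω]
    (P : Measure Ω) [IsProbabilityMeasure P]
    {I : Type*} [Fintype I] [Nonempty I]
    (a : I → ℝ) (ha : ∀ i, 0 < a i)
    (m : ℕ)
    (X : ℝ → I × Fin m → Ω → ℝ) (X₀ : ℝ → Ω → ℝ)
    (hXmeas : ∀ α ∈ Set.Ioo (0 : ℝ) 1, ∀ p, Measurable (X α p))
    (hX₀meas : ∀ α ∈ Set.Ioo (0 : ℝ) 1, Measurable (X₀ α))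
    (hXstab : ∀ α ∈ Set.Ioo (0 : ℝ) 1, ∀ p, IsPositiveStable P α (X α p))
    (hX₀stab : ∀ α ∈ Set.Ioo (0 : ℝ) 1, IsPositiveStable P α (X₀ α)) :
    (∀ δ : ℝ, 0 < δ →
      Tendsto
        (fun α : ℝ => P {ω | δ ≤
          |(Fintype.card I : ℝ) * ∑ j : Fin m, (∑ i : I, a i * X α (i, j) ω) ^ (-α) +
            (Fintype.card I : ℝ) * ∑ j : Fin m, Real.log
              ((P {ω' | X₀ α ω' ^ α ≤
                Finset.univ.sup' Finset.univ_nonempty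
                  (fun i : I => X α (i, j) ω ^ α)}).toReal)|})
        (nhdsWithin 0 (Set.Ioi 0)) (nhds 0)) ∧
    (∀ j : Fin m, ∀ δ : ℝ, 0 < δ →
      Tendsto
        (fun α : ℝ => P {ω | δ ≤
          |(∑ i : I, a i * X α (i, j) ω) ^ (-α) +
            Real.log ((P {ω' | X₀ α ω' ^ α ≤
              Finset.univ.sup' Finset.univ_nonempty
                (fun i : I => X α (i, j) ω ^ α)}).toReal)|})
        (nhdsWithin 0 (Set.Ioi 0)) (nhds 0)) := by
  have hrow := fun j : Fin m => tendstoInMeasure_rpow_neg_sum_mul_add_log_measureReal ha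
    (fun α i => X α (i, j)) X₀ (fun α hα i => hXmeas α hα (i, j)) hX₀meas
    (fun α hα i => hXstab α hα (i, j)) hX₀stab
  refine ⟨fun δ hδ => ?_, fun j => tendstoInMeasure_zero_iff_abs.1 (hrow j)⟩
  have hsum := TendstoInMeasure.const_smul
    (TendstoInMeasure.finset_sum (s := Finset.univ) fun j _ => hrow j) (Fintype.card I : ℝ)
  simp only [Pi.zero_apply, Finset.sum_const_zero, smul_zero] at hsum
  simpa only [smul_eq_mul, Finset.sum_add_distrib, mul_add, measureReal_def] using
    tendstoInMeasure_zero_iff_abs.1 hsum δ hδ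

/-- Equivalence of the projection and maximal-term pivots: with `I` a finite nonempty index
set of cardinality `c`, weights `a i > 0`, i.i.d. positive strictly `α`-stable variables
`X α (i, j)`, projections `V j = ∑ i, a i * X α (i, j)`, maxima `M j = max_i (X α (i, j))^α`,
and `F_α` the CDF of `(X α)^α` (computed from a generic copy `X₀ α`), the quantity
`c * ∑ j, (V j)^(-α) + c * ∑ j, log (F_α (M j))` converges to `0` in probability as `α → 0⁺`,
and in particular `(V j)^(-α) + log (F_α (M j))` converges to `0` in probability for each `j`. -/
theorem projection_maxterm_pivots_equivalent {Ω : Type*} [MeasurableSpace Ω]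
    (P : Measure Ω) [IsProbabilityMeasure P]
    {I : Type*} [Fintype I] [Nonempty I]
    (a : I → ℝ) (ha : ∀ i, 0 < a i)
    (m : ℕ) (hm : 0 < m)
    (X : ℝ → I × Fin m → Ω → ℝ) (X₀ : ℝ → Ω → ℝ)
    (hXmeas : ∀ α ∈ Set.Ioo (0 : ℝ) 1, ∀ p, Measurable (X α p))
    (hX₀meas : ∀ α ∈ Set.Ioo (0 : ℝ) 1, Measurable (X₀ α))
    (hXindep : ∀ α ∈ Set.Ioo (0 : ℝ) 1, iIndepFun (X α) P)
    (hXstab : ∀ α ∈ Set.Ioo (0 : ℝ) 1, ∀ p, IsPositiveStable P α (X α p))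
    (hX₀stab : ∀ α ∈ Set.Ioo (0 : ℝ) 1, IsPositiveStable P α (X₀ α)) :
    (∀ δ : ℝ, 0 < δ →
      Tendsto
        (fun α : ℝ => P {ω | δ ≤
          |(Fintype.card I : ℝ) * ∑ j : Fin m, (∑ i : I, a i * X α (i, j) ω) ^ (-α) +
            (Fintype.card I : ℝ) * ∑ j : Fin m, Real.log
              ((P {ω' | X₀ α ω' ^ α ≤
                Finset.univ.sup' Finset.univ_nonempty
                  (fun i : I => X α (i, j) ω ^ α)}).toReal)|})
        (nhdsWithin 0 (Set.Ioi 0)) (nhds 0)) ∧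
    (∀ j : Fin m, ∀ δ : ℝ, 0 < δ →
      Tendsto
        (fun α : ℝ => P {ω | δ ≤
          |(∑ i : I, a i * X α (i, j) ω) ^ (-α) +
            Real.log ((P {ω' | X₀ α ω' ^ α ≤
              Finset.univ.sup' Finset.univ_nonempty
                (fun i : I => X α (i, j) ω ^ α)}).toReal)|})
        (nhdsWithin 0 (Set.Ioi 0)) (nhds 0)) :=
  projection_maxterm_pivots_equivalent_general P a ha m X X₀ hXmeas hX₀meas hXstab hX₀stab
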